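/- Let (b_n)_{n≥1} be the paperfolding sequence. For every integer k ≥ 1, the Dirichlet series δ(2k+1) = ∑_{n≥1} b_n/n^(2k+1) satisfies 4^(2k+1)·(1 − 2^(−(2k+1)))·δ(2k+1) = −(2^(2k−1)/(2k)!)·π^(2k+1)·|E_{2k}| + 2^(2k)·(2^(2k+1) − 1)·ζ(2k+1). -/

import Mathlib

/-- Even-index Euler numbers: `E2 k = E_{2k}`, where `1/cosh t = ∑ E_n t^n/n!`
(equivalently, `E_0 = 1`, odd-index Euler numbers vanish, and
`∑_{j≤n} C(2n,2j) E_{2j} = 0` for `n ≥ 1`). -/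
def E2 : ℕ → ℤ
  | 0 => 1
  | n + 1 => -∑ k ∈ (Finset.range (n+1)).attach,
      ((2*(n+1)).choose (2*k.1) : ℤ) * E2 k.1
decreasing_by exact Finset.mem_range.mp k.2

/-- Thue–Morse sequence: `tm 0 = 0`, `tm (2n) = tm n`, `tm (2n+1) = 1 - tm n`. -/
def tm : ℕ → ℕ
  | 0 => 0
  | n + 1 => if (n+1) % 2 = 0 then tm ((n+1)/2) else 1 - tm ((n+1)/2)
decreasing_by all_goals exact Nat.div_lt_self (Nat.succ_pos n) one_lt_two

/-- Paperfolding (dragon-curve) sequence: `pf (2n) = pf n`, `pf (4n+1) = 0`,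
`pf (4n+3) = 1` (with `pf 0 = 0`). -/
def pf : ℕ → ℕ
  | 0 => 0
  | n + 1 => if (n+1) % 2 = 0 then pf ((n+1)/2) else if (n+1) % 4 = 1 then 0 else 1
decreasing_by exact Nat.div_lt_self (Nat.succ_pos n) one_lt_two


open Finset PowerSeries

lemma E2_zero : E2 0 = 1 := by rw [E2]

lemma E2_rec (n : ℕ) :
    ∑ j ∈ range (n+2), ((2*(n+1)).choose (2*j) : ℚ) * (E2 j : ℚ) = 0 := by
  have h : E2 (n+1) = -∑ j ∈ (range (n+1)).attach,
      ((2*(n+1)).choose (2*j.1) : ℤ) * E2 j.1 := by rw [E2]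
  have h2 : ∑ j ∈ range (n+1), ((2*(n+1)).choose (2*j) : ℤ) * E2 j = - E2 (n+1) := by
    rw [h, neg_neg, ← Finset.sum_attach (range (n+1)) (fun j => ((2*(n+1)).choose (2*j) : ℤ) * E2 j)]
  rw [Finset.sum_range_succ]
  have h3 : ∑ j ∈ range (n+1), ((2*(n+1)).choose (2*j) : ℚ) * (E2 j : ℚ)
      = ((- E2 (n+1) : ℤ) : ℚ) := by
    rw [← h2]; push_cast; ring
  rw [h3]
  have : (2*(n+1)).choose (2*(n+1)) = 1 := Nat.choose_self _
  rw [this]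
  push_cast
  ring

lemma sum_range_even_odd (f : ℕ → ℚ) (n : ℕ) :
    ∑ i ∈ range (2*n+1), f i
      = ∑ j ∈ range (n+1), f (2*j) + ∑ j ∈ range n, f (2*j+1) := by
  induction n with
  | zero => simp
  | succ n ih =>
    have : 2*(n+1)+1 = (2*n+1) + 1 + 1 := by ring
    rw [this, Finset.sum_range_succ, Finset.sum_range_succ, ih,
      Finset.sum_range_succ (fun j => f (2*j)) (n+1), Finset.sum_range_succ (fun j => f (2*j+1)) n]
    have e1 : 2*(n+1) = 2*n+1+1 := by ring
    rw [e1]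
    ring

noncomputable def Eul : ℕ → ℚ := fun m => if m % 2 = 0 then (E2 (m/2) : ℚ) else 0

noncomputable def Eser : PowerSeries ℚ := PowerSeries.mk fun m => Eul m / m.factorial

lemma coeff_cosh2 (j : ℕ) :
    (PowerSeries.coeff (R := ℚ) j) (exp ℚ + rescale (-1) (exp ℚ))
      = (1 + (-1)^j) / j.factorial := by
  rw [map_add, coeff_exp, coeff_rescale, coeff_exp]
  simp [Algebra.algebraMap_self]
  ring

lemma key1 : Eser * (exp ℚ + rescale (-1) (exp ℚ)) = (C (R := ℚ)) 2 := by
  ext N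
  rw [PowerSeries.coeff_mul, Finset.Nat.sum_antidiagonal_eq_sum_range_succ_mk]
  simp only [Eser, coeff_mk, coeff_cosh2, PowerSeries.coeff_C]
  rcases Nat.even_or_odd N with ⟨n, hn⟩ | ⟨n, hn⟩
  · have hN : N = 2*n := by omega
    subst hN
    rw [sum_range_even_odd (fun i => Eul i / i.factorial * ((1 + (-1)^(2*n - i)) / (2*n - i).factorial)) n]
    have hodd : ∑ j ∈ range n, Eul (2*j+1) / (2*j+1).factorial *
        ((1 + (-1)^(2*n - (2*j+1))) / (2*n - (2*j+1)).factorial) = 0 := by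
      apply Finset.sum_eq_zero
      intro j hj
      have : Eul (2*j+1) = 0 := by simp [Eul, Nat.mul_add_mod]
      rw [this]; ring
    rw [hodd, add_zero]
    have hterm : ∀ j ∈ range (n+1), Eul (2*j) / (2*j).factorial *
        ((1 + (-1)^(2*n - 2*j)) / (2*n - 2*j).factorial)
        = 2 / (2*n).factorial * (((2*n).choose (2*j) : ℚ) * (E2 j : ℚ)) := by
      intro j hj
      have hj' : j ≤ n := by simpa using Nat.lt_succ_iff.mp (Finset.mem_range.mp hj)
      have heul : Eul (2*j) = (E2 j : ℚ) := by simp [Eul, Nat.mul_mod_right, Nat.mul_div_cancel_left]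
      have hev : Even (2*n - 2*j) := ⟨n - j, by omega⟩
      have hpow : (-1 : ℚ)^(2*n - 2*j) = 1 := hev.neg_one_pow
      have hfac : (((2*n).choose (2*j)) * (2*j).factorial * (2*n - 2*j).factorial : ℚ)
          = ((2*n).factorial : ℚ) := by
        have h2 : 2*j ≤ 2*n := by omega
        exact_mod_cast congrArg (Nat.cast : ℕ → ℚ) (Nat.choose_mul_factorial_mul_factorial h2)
      have f1 : ((2*j).factorial : ℚ) ≠ 0 := Nat.cast_ne_zero.mpr (Nat.factorial_ne_zero _)
      have f2 : ((2*n - 2*j).factorial : ℚ) ≠ 0 := Nat.cast_ne_zero.mpr (Nat.factorial_ne_zero _)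
      have f3 : ((2*n).factorial : ℚ) ≠ 0 := Nat.cast_ne_zero.mpr (Nat.factorial_ne_zero _)
      rw [heul, hpow]
      have expand : (2:ℚ) / (2*n).factorial * (((2*n).choose (2*j):ℚ) * (E2 j:ℚ))
          = (2 * (((2*n).choose (2*j):ℚ) * (E2 j:ℚ))) / (2*n).factorial := by ring
      rw [expand, div_mul_div_comm, div_eq_div_iff (mul_ne_zero f1 f2) f3]
      linear_combination (-2 : ℚ) * (E2 j : ℚ) * hfac
    rw [Finset.sum_congr rfl hterm, ← Finset.mul_sum]
    rcases Nat.eq_zero_or_pos n with h0 | hpos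
    · subst h0; simp [E2_zero]
    · obtain ⟨m, hm⟩ := Nat.exists_eq_add_of_le hpos
      have hn2 : n = m + 1 := by omega
      subst hn2
      rw [E2_rec m, mul_zero]
      have h0 : 2*(m+1) ≠ 0 := by omega
      simp [h0]
  · have hN : N = 2*n+1 := by omega
    subst hN
    have : ∀ i ∈ range (2*n+1+1), Eul i / i.factorial *
        ((1 + (-1)^(2*n+1 - i)) / (2*n+1 - i).factorial) = 0 := by
      intro i hi
      have hi' : i ≤ 2*n+1 := by have := Finset.mem_range.mp hi; omega
      rcases Nat.even_or_odd i with he | ho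
      · have : Odd (2*n+1 - i) := by
          obtain ⟨a, ha⟩ := he
          refine ⟨n - a, by omega⟩
        rw [this.neg_one_pow]
        ring_nf
      · have : Eul i = 0 := by
          obtain ⟨a, ha⟩ := ho
          simp [Eul, ha, Nat.mul_add_mod]
        rw [this]; ring
    rw [Finset.sum_eq_zero this]
    simp

noncomputable def Pser (t : ℚ) : PowerSeries ℚ :=
  PowerSeries.mk fun n => Polynomial.aeval t ((1 / (n.factorial : ℚ)) • Polynomial.bernoulli n)

lemma hEmul (a b : ℚ) : rescale a (exp ℚ) * rescale b (exp ℚ) = rescale (a+b) (exp ℚ) :=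
  exp_mul_exp_eq_exp_add a b

lemma hE0 : rescale (0:ℚ) (exp ℚ) = 1 := by
  rw [rescale_zero]
  simp

lemma hX : rescale (4:ℚ) X = 4 * X := by
  have h4 : (4 : ℚ⟦X⟧) = C (R := ℚ) 4 := by simp [map_ofNat]
  ext n
  rw [coeff_rescale, h4, PowerSeries.coeff_C_mul, PowerSeries.coeff_X]
  split <;> simp_all

lemma hA (t : ℚ) : rescale 4 (Pser t) * (rescale (4:ℚ) (exp ℚ) - 1)
    = 4 * X * rescale (t*4) (exp ℚ) := by
  have h := Polynomial.bernoulli_generating_function (A := ℚ) t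
  have h2 := congrArg (rescale (4:ℚ)) h
  rw [map_mul, map_sub, map_one, map_mul, rescale_rescale] at h2
  rw [show rescale (4:ℚ) (PowerSeries.X) = 4 * X from hX] at h2
  rw [← h2]
  rfl

lemma hB : Eser * (rescale (4:ℚ) (exp ℚ) - 1)
    = 2 * exp ℚ * (rescale (2:ℚ) (exp ℚ) - 1) := by
  have e11 : exp ℚ * exp ℚ = rescale (2:ℚ) (exp ℚ) := by
    have := hEmul 1 1; rw [rescale_one] at this; norm_num at this; exact this
  have e22 : rescale (2:ℚ) (exp ℚ) * rescale (2:ℚ) (exp ℚ) = rescale (4:ℚ) (exp ℚ) := by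
    have := hEmul 2 2; norm_num at this; exact this
  have em1 : rescale (-1:ℚ) (exp ℚ) * exp ℚ = 1 := by
    have := hEmul (-1) 1; rw [rescale_one] at this; norm_num at this; exact this
  have hfact : rescale (4:ℚ) (exp ℚ) - 1
      = (exp ℚ + rescale (-1:ℚ) (exp ℚ)) * (exp ℚ * (rescale (2:ℚ) (exp ℚ) - 1)) := by
    have expand : (exp ℚ + rescale (-1:ℚ) (exp ℚ)) * (exp ℚ * (rescale (2:ℚ) (exp ℚ) - 1))
        = (exp ℚ * exp ℚ) * rescale (2:ℚ) (exp ℚ) - exp ℚ * exp ℚ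
          + ((rescale (-1:ℚ) (exp ℚ) * exp ℚ) * rescale (2:ℚ) (exp ℚ)
            - rescale (-1:ℚ) (exp ℚ) * exp ℚ) := by ring
    rw [expand, e11, em1, e22]; ring
  rw [hfact, show Eser * ((exp ℚ + rescale (-1:ℚ) (exp ℚ)) * (exp ℚ * (rescale (2:ℚ) (exp ℚ) - 1)))
      = (Eser * (exp ℚ + rescale (-1:ℚ) (exp ℚ))) * (exp ℚ * (rescale (2:ℚ) (exp ℚ) - 1)) from by ring,
    key1]
  have hC2 : (C (R := ℚ)) 2 = 2 := by simp [map_ofNat]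
  rw [hC2]; ring

lemma key2 : 2 * (rescale 4 (Pser (3/4)) - rescale 4 (Pser (1/4))) = 4 * (X * Eser) := by
  have hne : rescale (4:ℚ) (exp ℚ) - 1 ≠ 0 := by
    intro h
    have := congrArg (PowerSeries.coeff (R := ℚ) 1) h
    rw [map_sub, coeff_rescale, coeff_exp] at this
    simp at this
  apply mul_right_cancel₀ hne
  have h34 := hA (3/4)
  have h14 := hA (1/4)
  norm_num at h34 h14
  calc (2 * (rescale 4 (Pser (3/4)) - rescale 4 (Pser (1/4)))) * (rescale (4:ℚ) (exp ℚ) - 1)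
      = 2 * (rescale 4 (Pser (3/4)) * (rescale (4:ℚ) (exp ℚ) - 1))
        - 2 * (rescale 4 (Pser (1/4)) * (rescale (4:ℚ) (exp ℚ) - 1)) := by ring
    _ = 2 * (4 * X * rescale (3:ℚ) (exp ℚ)) - 2 * (4 * X * exp ℚ) := by
        rw [h34, h14]
    _ = 4 * X * (2 * (exp ℚ * rescale (2:ℚ) (exp ℚ)) - 2 * exp ℚ) := by
        have e12 : exp ℚ * rescale (2:ℚ) (exp ℚ) = rescale (3:ℚ) (exp ℚ) := by
          have := hEmul 1 2; rw [rescale_one] at this; norm_num at this; exact this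
        rw [e12]; ring
    _ = 4 * X * (2 * exp ℚ * (rescale (2:ℚ) (exp ℚ) - 1)) := by ring
    _ = 4 * X * (Eser * (rescale (4:ℚ) (exp ℚ) - 1)) := by rw [hB]
    _ = (4 * (X * Eser)) * (rescale (4:ℚ) (exp ℚ) - 1) := by ring

lemma alg (k : ℕ) : 4 * ((E2 k : ℚ) / (2*k).factorial)
    = 2 * (4^(2*k+1) * ((Polynomial.bernoulli (2*k+1)).eval (3/4 : ℚ)
        - (Polynomial.bernoulli (2*k+1)).eval (1/4 : ℚ)) / (2*k+1).factorial) := by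
  have h := congrArg (PowerSeries.coeff (R := ℚ) (2*k+1)) key2
  have hC2 : (2 : ℚ⟦X⟧) = C (R := ℚ) 2 := by simp [map_ofNat]
  have hC4 : (4 : ℚ⟦X⟧) = C (R := ℚ) 4 := by simp [map_ofNat]
  rw [hC2, hC4, PowerSeries.coeff_C_mul, PowerSeries.coeff_C_mul, PowerSeries.coeff_succ_X_mul,
    map_sub, coeff_rescale, coeff_rescale] at h
  simp only [Pser, coeff_mk, Eser] at h
  have heul : Eul (2*k) = (E2 k : ℚ) := by
    simp [Eul, Nat.mul_mod_right, Nat.mul_div_cancel_left]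
  rw [heul] at h
  have haev : ∀ t : ℚ, Polynomial.aeval t ((1 / ((2*k+1).factorial : ℚ)) • Polynomial.bernoulli (2*k+1))
      = (1 / ((2*k+1).factorial : ℚ)) * (Polynomial.bernoulli (2*k+1)).eval t := by
    intro t
    rw [map_smul, smul_eq_mul, Polynomial.coe_aeval_eq_eval]
  rw [haev, haev] at h
  have hfne : (((2*k+1).factorial : ℚ)) ≠ 0 := Nat.cast_ne_zero.mpr (Nat.factorial_ne_zero _)
  field_simp at h ⊢
  linear_combination -h

lemma pf_succ (n : ℕ) : pf (n+1) = if (n+1) % 2 = 0 then pf ((n+1)/2) else if (n+1) % 4 = 1 then 0 else 1 := by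
  rw [pf]

lemma pf_zero : pf 0 = 0 := by rw [pf]

lemma pf_two_mul (m : ℕ) : pf (2 * m) = pf m := by
  match m with
  | 0 => rfl
  | m + 1 =>
    have h : 2 * (m+1) = (2*m+1) + 1 := by ring
    rw [h, pf_succ]
    have : (2*m+1+1) % 2 = 0 := by omega
    simp only [this, if_true, if_pos]
    congr 1
    omega

lemma pf_4add1 (i : ℕ) : pf (4 * i + 1) = 0 := by
  rw [pf_succ]
  have h2 : (4*i+1) % 2 = 1 := by omega
  have h4 : (4*i+1) % 4 = 1 := by omega
  simp [h2, h4]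

lemma pf_4add3 (i : ℕ) : pf (4 * i + 3) = 1 := by
  have h : 4 * i + 3 = (4*i+2) + 1 := rfl
  rw [h, pf_succ]
  have h2 : (4*i+2+1) % 2 = 1 := by omega
  have h4 : (4*i+2+1) % 4 = 3 := by omega
  simp [h2, h4]

lemma pf_le_one (n : ℕ) : pf n ≤ 1 := by
  induction n using Nat.strong_induction_on with
  | _ n ih =>
    match n with
    | 0 => rw [pf]; exact Nat.zero_le 1
    | n + 1 =>
      rw [pf_succ]
      split
      · exact ih _ (Nat.div_lt_self (Nat.succ_pos n) one_lt_two)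
      · split <;> omega

lemma split4 (f : ℕ → ℝ) (hf : Summable f) :
    ∑' n, f n = (∑' m, f (2*m)) + ((∑' i, f (4*i+1)) + (∑' i, f (4*i+3))) := by
  have h2 : Function.Injective (fun m : ℕ => 2*m) := fun a b h => by simpa using h
  have h21 : Function.Injective (fun m : ℕ => 2*m+1) := fun a b h => by simp at h; omega
  have he : Summable (fun m => f (2*m)) := hf.comp_injective h2
  have ho : Summable (fun m => f (2*m+1)) := hf.comp_injective h21
  have e1 : (fun i : ℕ => (fun m => f (2*m+1)) (2*i)) = fun i => f (4*i+1) := by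
    funext i; congr 1; ring
  have e2 : (fun i : ℕ => (fun m => f (2*m+1)) (2*i+1)) = fun i => f (4*i+3) := by
    funext i; congr 1; ring
  have hoe : Summable (fun i => f (4*i+1)) := by rw [← e1]; exact ho.comp_injective h2
  have hoo : Summable (fun i => f (4*i+3)) := by rw [← e2]; exact ho.comp_injective h21
  rw [← tsum_even_add_odd he ho]
  congr 1
  rw [← tsum_even_add_odd (by rw [e1]; exact hoe) (by rw [e2]; exact hoo), e1, e2]

lemma sin14_1 (s : ℕ) (i : ℕ) :
    1 / ((4*i+1 : ℕ) : ℝ)^s * Real.sin (2 * Real.pi * ((4*i+1 : ℕ):ℝ) * (1/4)) =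
      1 / ((4*i+1 : ℕ) : ℝ)^s := by
  have : 2 * Real.pi * ((4*i+1 : ℕ):ℝ) * (1/4) = Real.pi/2 + (i:ℝ) * (2*Real.pi) := by
    push_cast; ring
  rw [this, Real.sin_add_nat_mul_two_pi, Real.sin_pi_div_two, mul_one]

lemma sin14_3 (s : ℕ) (i : ℕ) :
    1 / ((4*i+3 : ℕ) : ℝ)^s * Real.sin (2 * Real.pi * ((4*i+3 : ℕ):ℝ) * (1/4)) =
      -(1 / ((4*i+3 : ℕ) : ℝ)^s) := by
  have : 2 * Real.pi * ((4*i+3 : ℕ):ℝ) * (1/4) = (Real.pi/2 + Real.pi) + (i:ℝ) * (2*Real.pi) := by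
    push_cast; ring
  rw [this, Real.sin_add_nat_mul_two_pi, Real.sin_add_pi, Real.sin_pi_div_two]
  ring

lemma sin34_1 (s : ℕ) (i : ℕ) :
    1 / ((4*i+1 : ℕ) : ℝ)^s * Real.sin (2 * Real.pi * ((4*i+1 : ℕ):ℝ) * (3/4)) =
      -(1 / ((4*i+1 : ℕ) : ℝ)^s) := by
  have : 2 * Real.pi * ((4*i+1 : ℕ):ℝ) * (3/4) = (Real.pi/2 + Real.pi) + ((3*i : ℕ):ℝ) * (2*Real.pi) := by
    push_cast; ring
  rw [this, Real.sin_add_nat_mul_two_pi, Real.sin_add_pi, Real.sin_pi_div_two]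
  ring

lemma sin34_3 (s : ℕ) (i : ℕ) :
    1 / ((4*i+3 : ℕ) : ℝ)^s * Real.sin (2 * Real.pi * ((4*i+3 : ℕ):ℝ) * (3/4)) =
      1 / ((4*i+3 : ℕ) : ℝ)^s := by
  have : 2 * Real.pi * ((4*i+3 : ℕ):ℝ) * (3/4) = Real.pi/2 + ((3*i+2 : ℕ):ℝ) * (2*Real.pi) := by
    push_cast; ring
  rw [this, Real.sin_add_nat_mul_two_pi, Real.sin_pi_div_two, mul_one]

set_option maxHeartbeats 1000000 in
theorem paperfolding_delta_odd (k : ℕ) (hk : 1 ≤ k) :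
    (4:ℝ) ^ (2*k+1) * (1 - (2:ℝ) ^ (-(2*(k:ℤ)+1))) *
        ∑' n : ℕ, (pf (n+1) : ℝ) / ((n:ℝ) + 1) ^ (2*k+1) =
      -((2:ℝ) ^ (2*k-1) / (Nat.factorial (2*k))) * Real.pi ^ (2*k+1) * |(E2 k : ℝ)|
        + 2 ^ (2*k) * (2 ^ (2*k+1) - 1) * ∑' n : ℕ, (1:ℝ) / ((n:ℝ) + 1) ^ (2*k+1) := by
  have hk0 : k ≠ 0 := by omega
  -- the summand functions
  set G : ℕ → ℝ := fun n => 1 / (n:ℝ)^(2*k+1) with hGdef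
  set F : ℕ → ℝ := fun n => (pf n : ℝ) / (n:ℝ)^(2*k+1) with hFdef
  have hG : Summable G := Real.summable_one_div_nat_pow.mpr (by omega)
  have hF : Summable F := by
    apply Summable.of_nonneg_of_le (fun n => by positivity) (fun n => ?_) hG
    simp only [hFdef, hGdef]
    rcases n with _ | n
    · simp [pf_zero]
    · have h1 : ((pf (n+1) : ℝ)) ≤ 1 := by exact_mod_cast pf_le_one (n+1)
      have h2 : (0:ℝ) < ((n+1 : ℕ):ℝ)^(2*k+1) := by positivity
      exact (div_le_div_iff_of_pos_right h2).mpr h1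
  -- the two sine series
  have h14 : (1/4 : ℝ) ∈ Set.Icc (0:ℝ) 1 := by constructor <;> norm_num
  have h34 : (3/4 : ℝ) ∈ Set.Icc (0:ℝ) 1 := by constructor <;> norm_num
  have hsum14 := hasSum_one_div_nat_pow_mul_sin hk0 h14
  have hsum34 := hasSum_one_div_nat_pow_mul_sin hk0 h34
  -- names for the pieces
  set T : ℝ := ∑' i : ℕ, G (4*i+3) with hTdef
  set U : ℝ := ∑' i : ℕ, G (4*i+1) with hUdef
  set A : ℝ := ∑' n : ℕ, F n with hAdef
  set B : ℝ := ∑' n : ℕ, G n with hBdef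
  -- splitting of A
  have hF2 : ∀ m : ℕ, F (2*m) = (1/2^(2*k+1)) * F m := by
    intro m
    simp only [hFdef]
    rw [pf_two_mul]
    push_cast
    rw [mul_pow]
    ring
  have hG2 : ∀ m : ℕ, G (2*m) = (1/2^(2*k+1)) * G m := by
    intro m
    simp only [hGdef]
    push_cast
    rw [mul_pow]
    ring
  have eF1 : ∑' m : ℕ, F (2*m) = (1/2^(2*k+1)) * A := by
    rw [tsum_congr hF2, tsum_mul_left, ← hAdef]
  have eF2 : ∑' i : ℕ, F (4*i+1) = 0 := by
    rw [tsum_congr (fun i => ?_)]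
    · exact tsum_zero
    · simp only [hFdef]; rw [pf_4add1]; simp
  have eF3 : ∑' i : ℕ, F (4*i+3) = T := by
    rw [hTdef]
    exact tsum_congr fun i => by simp only [hFdef, hGdef]; rw [pf_4add3]; simp
  have eG1 : ∑' m : ℕ, G (2*m) = (1/2^(2*k+1)) * B := by
    rw [tsum_congr hG2, tsum_mul_left, ← hBdef]
  have eqA : A = (1/2^(2*k+1)) * A + T := by
    conv_lhs => rw [hAdef, split4 F hF]
    rw [eF1, eF2, eF3, zero_add]
  have eqB : B = (1/2^(2*k+1)) * B + (U + T) := by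
    conv_lhs => rw [hBdef, split4 G hG]
    rw [eG1, ← hUdef, ← hTdef]
  -- the sine sums
  have hsplit14 : (-1:ℝ) ^ (k + 1) * (2 * Real.pi) ^ (2 * k + 1) / 2 / (2 * k + 1).factorial *
      (Polynomial.map (algebraMap ℚ ℝ) (Polynomial.bernoulli (2 * k + 1))).eval (1/4 : ℝ)
      = U - T := by
    rw [← hsum14.tsum_eq, split4 _ hsum14.summable]
    have e0 : ∑' m : ℕ, (1 / ((2*m : ℕ):ℝ)^(2*k+1) * Real.sin (2 * Real.pi * ((2*m : ℕ):ℝ) * (1/4))) = 0 := by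
      rw [tsum_congr (fun m => ?_)]
      · exact tsum_zero
      · have : 2 * Real.pi * ((2*m : ℕ):ℝ) * (1/4) = (m:ℝ) * Real.pi := by push_cast; ring
        rw [this, Real.sin_nat_mul_pi, mul_zero]
    rw [e0, tsum_congr (sin14_1 (2*k+1)), tsum_congr (sin14_3 (2*k+1)), tsum_neg]
    rw [hUdef, hTdef]
    simp only [hGdef]
    ring
  have hsplit34 : (-1:ℝ) ^ (k + 1) * (2 * Real.pi) ^ (2 * k + 1) / 2 / (2 * k + 1).factorial *
      (Polynomial.map (algebraMap ℚ ℝ) (Polynomial.bernoulli (2 * k + 1))).eval (3/4 : ℝ)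
      = T - U := by
    rw [← hsum34.tsum_eq, split4 _ hsum34.summable]
    have e0 : ∑' m : ℕ, (1 / ((2*m : ℕ):ℝ)^(2*k+1) * Real.sin (2 * Real.pi * ((2*m : ℕ):ℝ) * (3/4))) = 0 := by
      rw [tsum_congr (fun m => ?_)]
      · exact tsum_zero
      · have : 2 * Real.pi * ((2*m : ℕ):ℝ) * (3/4) = ((3*m : ℕ):ℝ) * Real.pi := by push_cast; ring
        rw [this, Real.sin_nat_mul_pi, mul_zero]
    rw [e0, tsum_congr (sin34_1 (2*k+1)), tsum_congr (sin34_3 (2*k+1)), tsum_neg]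
    rw [hUdef, hTdef]
    simp only [hGdef]
    ring
  -- bernoulli casts
  have hcast : ∀ t : ℚ, (Polynomial.map (algebraMap ℚ ℝ) (Polynomial.bernoulli (2*k+1))).eval ((t:ℝ))
      = (((Polynomial.bernoulli (2*k+1)).eval t : ℚ) : ℝ) := by
    intro t
    rw [show ((t:ℝ)) = algebraMap ℚ ℝ t from (eq_ratCast (algebraMap ℚ ℝ) t).symm,
      Polynomial.eval_map, Polynomial.eval₂_at_apply, eq_ratCast]
  have c14 : (1/4 : ℝ) = ((1/4 : ℚ) : ℝ) := by norm_num
  have c34 : (3/4 : ℝ) = ((3/4 : ℚ) : ℝ) := by norm_num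
  set b14 : ℝ := (((Polynomial.bernoulli (2*k+1)).eval (1/4 : ℚ) : ℚ) : ℝ) with hb14def
  set b34 : ℝ := (((Polynomial.bernoulli (2*k+1)).eval (3/4 : ℚ) : ℚ) : ℝ) with hb34def
  rw [c14, hcast] at hsplit14
  rw [c34, hcast] at hsplit34
  -- T ≤ U
  have hinj1 : Function.Injective (fun i : ℕ => 4*i+1) := fun a b h => by simp at h; omega
  have hinj3 : Function.Injective (fun i : ℕ => 4*i+3) := fun a b h => by simp at h; omega
  have hTU : T ≤ U := by
    apply Summable.tsum_le_tsum (fun i => ?_) (hG.comp_injective hinj3) (hG.comp_injective hinj1)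
    simp only [hGdef]
    apply one_div_le_one_div_of_le (by positivity)
    apply pow_le_pow_left₀ (by positivity) ?_ _
    push_cast; linarith
  -- the rational identity, over ℝ
  have algR : 4 * ((E2 k : ℝ) / (2*k).factorial)
      = 2 * (4^(2*k+1) * (b34 - b14) / (2*k+1).factorial) := by
    have := alg k
    have h2 := congrArg (fun q : ℚ => (q : ℝ)) this
    push_cast at h2
    push_cast [hb14def, hb34def]
    convert h2 using 2 <;> norm_num
  -- nonvanishing facts
  have hw : ((2:ℝ)^(2*k-1)) ≠ 0 := by positivity
  have hFc : (((2*k).factorial : ℕ):ℝ) ≠ 0 := Nat.cast_ne_zero.mpr (Nat.factorial_ne_zero _)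
  have hc1 : ((2*(k:ℝ)+1)) ≠ 0 := by positivity
  have hπ : Real.pi ≠ 0 := Real.pi_ne_zero
  -- power rewrites
  have hp4 : (4:ℝ)^(2*k+1) = 2^(2*k+1) * 2^(2*k+1) := by
    rw [show (4:ℝ) = 2*2 from by norm_num, mul_pow]
  have hp2 : (2:ℝ)^(2*k+1) = 2 * 2^(2*k) := by rw [pow_succ]; ring
  have hp2' : (2:ℝ)^(2*k) = 2^(2*k-1) * 2 := by
    rw [← pow_succ]
    congr 1
    omega
  have hpπ : (2*Real.pi)^(2*k+1) = 2^(2*k+1) * Real.pi^(2*k+1) := mul_pow 2 Real.pi (2*k+1)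
  have hfacs : (((2*k+1).factorial : ℕ):ℝ) = (2*(k:ℝ)+1) * (((2*k).factorial : ℕ):ℝ) := by
    rw [show (2*k+1) = (2*k) + 1 from rfl, Nat.factorial_succ]
    push_cast
    ring
  -- polynomial-form facts
  have P1 : (2:ℝ)^(2*k+1) * A = A + 2^(2*k+1) * T := by
    have h2s : ((2:ℝ)^(2*k+1)) ≠ 0 := by positivity
    field_simp at eqA
    linear_combination eqA
  have P2 : (2:ℝ)^(2*k+1) * B = B + 2^(2*k+1) * (U + T) := by
    have h2s : ((2:ℝ)^(2*k+1)) ≠ 0 := by positivity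
    field_simp at eqB
    linear_combination eqB
  have P3 : 2 * (2*(k:ℝ)+1) * (((2*k).factorial : ℕ):ℝ) * (U - T)
      = (-1)^k * (-1) * ((2^(2*k+1) * Real.pi^(2*k+1))) * b14 := by
    rw [← pow_succ, ← hpπ]
    rw [hfacs] at hsplit14
    field_simp at hsplit14
    linear_combination -hsplit14
  have P4 : b14 * (2^(2*k+1) * 2^(2*k+1)) = -(E2 k : ℝ) * (2*(k:ℝ)+1) := by
    -- from algR and b34 = -b14
    have hKne : ((-1:ℝ) ^ (k + 1) * (2 * Real.pi) ^ (2 * k + 1) / 2 / (2 * k + 1).factorial) ≠ 0 := by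
      apply div_ne_zero (div_ne_zero (mul_ne_zero (pow_ne_zero _ (by norm_num)) (by positivity)) two_ne_zero)
      rw [hfacs]
      positivity
    have hb : b34 = -b14 := by
      apply mul_left_cancel₀ hKne
      rw [hsplit34, show ((-1:ℝ) ^ (k + 1) * (2 * Real.pi) ^ (2 * k + 1) / 2 / (2 * k + 1).factorial) * -b14
          = -(((-1:ℝ) ^ (k + 1) * (2 * Real.pi) ^ (2 * k + 1) / 2 / (2 * k + 1).factorial) * b14) from by ring,
        hsplit14]
      ring
    rw [hb] at algR
    rw [hfacs, hp4] at algR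
    field_simp at algR
    have hm : ((-4:ℝ) * (((2*k).factorial : ℕ):ℝ)) ≠ 0 := mul_ne_zero (by norm_num) hFc
    apply mul_left_cancel₀ hm
    linear_combination -(((2*k).factorial : ℕ):ℝ) * algR
  -- sign of E2 k
  have hE : 0 ≤ (-1:ℝ)^k * (E2 k : ℝ) := by
    have h1 : 0 ≤ U - T := by linarith
    have h2 : 0 ≤ 2 * (2*(k:ℝ)+1) * (((2*k).factorial : ℕ):ℝ) * (U - T) := by positivity
    rw [P3] at h2
    have hpos : (0:ℝ) < 2^(2*k+1) * Real.pi^(2*k+1) := by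
      have : Real.pi ^ (2*k+1) > 0 := pow_pos Real.pi_pos _
      positivity
    have h2' : 0 ≤ ((-1:ℝ)^(k+1) * b14) * (2^(2*k+1) * Real.pi^(2*k+1)) := by
      rw [pow_succ]
      linarith [h2]
    have h4 : 0 ≤ (-1:ℝ)^(k+1) * b14 := (mul_nonneg_iff_of_pos_right hpos).mp h2'
    have hpos2 : (0:ℝ) < (2:ℝ)^(2*k+1) * 2^(2*k+1) := by positivity
    have h6 : ((-1:ℝ)^(k+1) * b14) * (2^(2*k+1) * 2^(2*k+1)) = ((-1:ℝ)^k * (E2 k : ℝ)) * (2*(k:ℝ)+1) := by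
      rw [pow_succ]
      linear_combination ((-1:ℝ)^k * (-1)) * P4
    have h7 : 0 ≤ ((-1:ℝ)^k * (E2 k : ℝ)) * (2*(k:ℝ)+1) := by
      rw [← h6]
      exact mul_nonneg h4 (le_of_lt hpos2)
    have hc1pos : (0:ℝ) < 2*(k:ℝ)+1 := by positivity
    exact (mul_nonneg_iff_of_pos_right hc1pos).mp h7
  have habs : |(E2 k : ℝ)| = (-1:ℝ)^k * (E2 k : ℝ) := by
    rcases Nat.even_or_odd k with he | ho
    · rw [he.neg_one_pow, one_mul]
      rw [he.neg_one_pow, one_mul] at hE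
      exact abs_of_nonneg hE
    · rw [ho.neg_one_pow] at hE ⊢
      rw [abs_of_nonpos (by linarith), neg_one_mul]
  -- statement sums are A and B
  have hshiftF : Summable (fun n => F (n+1)) :=
    hF.comp_injective (fun a b h => by simpa using h)
  have hshiftG : Summable (fun n => G (n+1)) :=
    hG.comp_injective (fun a b h => by simpa using h)
  have stA : ∑' n : ℕ, (pf (n+1) : ℝ) / ((n:ℝ) + 1) ^ (2*k+1) = A := by
    rw [hAdef, tsum_eq_zero_add' hshiftF]
    have hF0 : F 0 = 0 := by simp [hFdef, pf_zero]
    rw [hF0, zero_add]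
    exact tsum_congr fun n => by simp only [hFdef]; push_cast; ring_nf
  have stB : ∑' n : ℕ, (1:ℝ) / ((n:ℝ) + 1) ^ (2*k+1) = B := by
    rw [hBdef, tsum_eq_zero_add' hshiftG]
    have hG0 : G 0 = 0 := by simp [hGdef, zero_pow (by omega : 2*k+1 ≠ 0)]
    rw [hG0, zero_add]
    exact tsum_congr fun n => by simp only [hGdef]; push_cast; ring_nf
  -- the zpow
  have hzpow : (2:ℝ) ^ (-(2*(k:ℤ)+1)) = 1/2^(2*k+1) := by
    rw [show (-(2*(k:ℤ)+1)) = -((2*k+1 : ℕ) : ℤ) from by push_cast; ring, zpow_neg, zpow_natCast,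
      one_div]
  rw [stA, stB, hzpow, habs]
  -- final arithmetic
  rw [hp4, hp2, hp2']
  rw [hp2, hp2'] at P1 P2 P3 P4
  have P5 : 8*((2:ℝ)^(2*k-1))*(((2*k).factorial : ℕ):ℝ)*(U-T)
      = Real.pi^(2*k+1) * ((-1:ℝ)^k * (E2 k : ℝ)) := by
    apply mul_left_cancel₀ (show (4*((2:ℝ)^(2*k-1))*(2*(k:ℝ)+1)) ≠ 0 from by positivity)
    linear_combination (16*((2:ℝ)^(2*k-1))^2) * P3
      - (4*((2:ℝ)^(2*k-1))*Real.pi^(2*k+1)*(-1:ℝ)^k) * P4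
  field_simp
  linear_combination (4*(((2*k).factorial : ℕ):ℝ)) * P1
    - (2*(((2*k).factorial : ℕ):ℝ)) * P2
    - P5
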